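/- arXiv:2512.24575 — 5 statements merged into one kernel-verified Lean document; each statement's English description precedes it below -/
import Mathlib

section
/- If A, B ∈ ℂ^{N×N} are positive semidefinite Hermitian matrices, then their convolution A ⋄ B is positive semidefinite (Jury's theorem). -/
noncomputable def conv {M N : ℕ} (A B : Matrix (Fin M) (Fin N) ℂ) : Matrix (Fin M) (Fin N) ℂ :=
  fun i j => ∑ l ∈ Finset.Iic i, ∑ k ∈ Finset.Iic j, A l k * B (i - l) (j - k)

noncomputable def convId {M N : ℕ} : Matrix (Fin M) (Fin N) ℂ :=
  fun i j => if i.1 = 0 ∧ j.1 = 0 then 1 else 0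

noncomputable def convPow {M N : ℕ} (A : Matrix (Fin M) (Fin N) ℂ) : ℕ → Matrix (Fin M) (Fin N) ℂ
  | 0 => convId
  | k+1 => conv (convPow A k) A

noncomputable def convPoly {M N : ℕ} (p : Polynomial ℂ) (A : Matrix (Fin M) (Fin N) ℂ) :
    Matrix (Fin M) (Fin N) ℂ :=
  ∑ k ∈ p.support, p.coeff k • convPow A k

/-!
A positive semidefinite matrix is a sum of rank-one matrices `v vᴴ`, and `conv` is bilinear, so
it suffices to treat rank-one matrices. There the convolution of matrices factors through the
truncated convolution of vectors: `(u uᴴ) ⋄ (v vᴴ) = (u ∗ v)(u ∗ v)ᴴ`, which is again of the form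
`w wᴴ`, hence positive semidefinite.
-/

open Matrix Finset

noncomputable def vecConv {N : ℕ} (u v : Fin N → ℂ) : Fin N → ℂ :=
  fun i => ∑ l ∈ Iic i, u l * v (i - l)

lemma star_vecConv {N : ℕ} (u v : Fin N → ℂ) :
    star (vecConv u v) = vecConv (star u) (star v) := by
  ext i
  simp [vecConv, star_sum]

lemma conv_vecMulVec {M N : ℕ} (u u' : Fin M → ℂ) (w w' : Fin N → ℂ) :
    conv (vecMulVec u w) (vecMulVec u' w') = vecMulVec (vecConv u u') (vecConv w w') := by
  ext i j
  simp only [conv, vecConv, vecMulVec_apply, sum_mul_sum]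
  exact sum_congr rfl fun _ _ => sum_congr rfl fun _ _ => by ring

lemma conv_sum_left {M N : ℕ} {ι : Type*} (s : Finset ι) (A : ι → Matrix (Fin M) (Fin N) ℂ)
    (B : Matrix (Fin M) (Fin N) ℂ) : conv (∑ r ∈ s, A r) B = ∑ r ∈ s, conv (A r) B := by
  ext i j
  simp only [conv, Matrix.sum_apply, sum_mul]
  exact (sum_congr rfl fun _ _ => sum_comm).trans sum_comm

lemma conv_sum_right {M N : ℕ} {ι : Type*} (s : Finset ι) (A : Matrix (Fin M) (Fin N) ℂ)
    (B : ι → Matrix (Fin M) (Fin N) ℂ) : conv A (∑ r ∈ s, B r) = ∑ r ∈ s, conv A (B r) := by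
  ext i j
  simp only [conv, Matrix.sum_apply, mul_sum]
  exact (sum_congr rfl fun _ _ => sum_comm).trans sum_comm

open scoped ComplexOrder in
theorem conv_posSemidef (N : ℕ) (A B : Matrix (Fin N) (Fin N) ℂ)
    (hA : A.PosSemidef) (hB : B.PosSemidef) : (conv A B).PosSemidef := by
  obtain ⟨m, u, rfl⟩ := posSemidef_iff_eq_sum_vecMulVec.mp hA
  obtain ⟨n, v, rfl⟩ := posSemidef_iff_eq_sum_vecMulVec.mp hB
  simp_rw [conv_sum_left, conv_sum_right, conv_vecMulVec, ← star_vecConv]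
  exact posSemidef_sum _ fun _ _ => posSemidef_sum _ fun _ _ => posSemidef_vecMulVec_self_star _
end

section
/- For a polynomial p(z) = Σ_k c_k z^k ∈ ℂ[z] and A = [[a, b], [c, d]] ∈ ℂ^{2×2}, the induced action p_⋄(A) := Σ_k c_k A^{⋄k} equals [[p(a), b p'(a)], [c p'(a), d p'(a) + b c p''(a)]]. -/
/-! On `2 × 2` matrices the convolution product is multiplication in `ℂ[s, t] / (s², t²)`, with
`!![a, b; c, d]` standing for `a + b s + c t + d s t`. Taylor expansion of `p` at `a` stops at
second order there, and `(b s + c t)² = 2 b c s t` produces the term `b c p''(a)`. Concretely,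
the claimed right-hand side is linear in `p`, and convolving it on the right with `A` realises
multiplication of `p` by `X`; induction gives the convolution powers, linearity the rest. -/

open Polynomial

lemma conv_fin_two (A B : Matrix (Fin 2) (Fin 2) ℂ) :
    conv A B = !![A 0 0 * B 0 0, A 0 0 * B 0 1 + A 0 1 * B 0 0;
                  A 0 0 * B 1 0 + A 1 0 * B 0 0,
                  A 0 0 * B 1 1 + A 0 1 * B 1 0 + A 1 0 * B 0 1 + A 1 1 * B 0 0] := by
  have h0 : Finset.Iic (0 : Fin 2) = {0} := by decide
  have h1 : Finset.Iic (1 : Fin 2) = {0, 1} := by decide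
  ext i j
  fin_cases i <;> fin_cases j <;> simp [conv, h0, h1]
  ring

noncomputable def jetMatrix (a b c d : ℂ) : ℂ[X] →ₗ[ℂ] Matrix (Fin 2) (Fin 2) ℂ where
  toFun p := !![p.eval a, b * p.derivative.eval a;
                c * p.derivative.eval a,
                d * p.derivative.eval a + b * c * (p.derivative.derivative.eval a)]
  map_add' p q := by
    ext i j
    fin_cases i <;> fin_cases j <;> simp <;> ring
  map_smul' t p := by
    ext i j
    fin_cases i <;> fin_cases j <;> simp <;> ring

lemma jetMatrix_one (a b c d : ℂ) : jetMatrix a b c d 1 = convId := by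
  ext i j
  fin_cases i <;> fin_cases j <;> simp [jetMatrix, convId]

lemma conv_jetMatrix (a b c d : ℂ) (p : ℂ[X]) :
    conv (jetMatrix a b c d p) !![a, b; c, d] = jetMatrix a b c d (p * X) := by
  ext i j
  fin_cases i <;> fin_cases j <;> simp [conv_fin_two, jetMatrix] <;> ring

lemma convPow_fin_two (a b c d : ℂ) (n : ℕ) :
    convPow !![a, b; c, d] n = jetMatrix a b c d (X ^ n) := by
  induction n with
  | zero => rw [pow_zero, jetMatrix_one, convPow]
  | succ n ih => rw [convPow, ih, conv_jetMatrix, pow_succ]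

theorem convPoly_two_by_two (p : Polynomial ℂ) (a b c d : ℂ) :
    convPoly p !![a, b; c, d] =
      !![p.eval a, b * p.derivative.eval a;
         c * p.derivative.eval a,
         d * p.derivative.eval a + b * c * (p.derivative.derivative.eval a)] := by
  calc convPoly p !![a, b; c, d]
      = ∑ k ∈ p.support, p.coeff k • jetMatrix a b c d (X ^ k) := by
        simp only [convPoly, convPow_fin_two]
    _ = jetMatrix a b c d p := by
        simp only [← map_smul, ← map_sum, smul_X_eq_monomial, ← as_sum_support]
    _ = _ := rfl
end

section
/- (Sharpness of the Cayley–Hamilton degree) Let A ∈ ℂ^{M×N} be the matrix with all entries equal to 1 except entry (0,0) equal to 0. Then for every ℓ with 1 ≤ ℓ ≤ M+N-2, the convolution power A^{⋄ℓ} is not the zero matrix; in particular, for each (i₀,j₀) with i₀+j₀ = ℓ, the entry (A^{⋄ℓ})_{i₀,j₀} is nonzero. -/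
lemma key (M N : ℕ) (A : Matrix (Fin M) (Fin N) ℂ)
    (hA : ∀ i j, A i j = if i.1 = 0 ∧ j.1 = 0 then 0 else 1) (l : ℕ) :
    ∀ i j, (convPow A l i j).im = 0 ∧ 0 ≤ (convPow A l i j).re ∧
      (i.1 + j.1 = l → 0 < (convPow A l i j).re) := by
  have hAim : ∀ i j, (A i j).im = 0 := by
    intro i j; rw [hA]; split <;> simp
  have hAre0 : ∀ i j, 0 ≤ (A i j).re := by
    intro i j; rw [hA]; split <;> simp
  have hAre1 : ∀ i j, ¬(i.1 = 0 ∧ j.1 = 0) → (A i j).re = 1 := by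
    intro i j h; rw [hA]; simp [h]
  induction l with
  | zero =>
    intro i j
    simp only [convPow, convId]
    split
    · simp_all
    · simp_all
  | succ l ih =>
    intro i j
    have him : ∀ a ∈ Finset.Iic i, ∀ b ∈ Finset.Iic j,
        (convPow A l a b * A (i - a) (j - b)).im = 0 := by
      intro a _ b _
      rw [Complex.mul_im, (ih a b).1, hAim]
      ring
    have hre : ∀ a ∈ Finset.Iic i, ∀ b ∈ Finset.Iic j,
        (convPow A l a b * A (i - a) (j - b)).re
          = (convPow A l a b).re * (A (i - a) (j - b)).re := by
      intro a _ b _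
      rw [Complex.mul_re, (ih a b).1, hAim]
      ring
    have hre0 : ∀ a ∈ Finset.Iic i, ∀ b ∈ Finset.Iic j,
        0 ≤ (convPow A l a b * A (i - a) (j - b)).re := by
      intro a ha b hb
      rw [hre a ha b hb]
      exact mul_nonneg (ih a b).2.1 (hAre0 _ _)
    refine ⟨?_, ?_, ?_⟩
    · show (conv (convPow A l) A i j).im = 0
      unfold conv
      rw [Complex.im_sum]
      refine Finset.sum_eq_zero fun a ha => ?_
      rw [Complex.im_sum]
      exact Finset.sum_eq_zero fun b hb => him a ha b hb
    · show 0 ≤ (conv (convPow A l) A i j).re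
      unfold conv
      rw [Complex.re_sum]
      refine Finset.sum_nonneg fun a ha => ?_
      rw [Complex.re_sum]
      exact Finset.sum_nonneg fun b hb => hre0 a ha b hb
    · intro hij
      show 0 < (conv (convPow A l) A i j).re
      have ha0lt : min i.1 l < M := lt_of_le_of_lt (min_le_left _ _) i.isLt
      set a0 : Fin M := ⟨min i.1 l, ha0lt⟩ with ha0
      have hb0le : l - min i.1 l ≤ j.1 := by omega
      set b0 : Fin N := ⟨l - min i.1 l, lt_of_le_of_lt hb0le j.isLt⟩ with hb0
      have ha0i : a0 ≤ i := by simp [ha0, Fin.le_def]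
      have hb0j : b0 ≤ j := hb0le
      have hsub1 : ((i - a0 : Fin M) : ℕ) = i.1 - a0.1 := Fin.coe_sub_iff_le.2 ha0i
      have hsub2 : ((j - b0 : Fin N) : ℕ) = j.1 - b0.1 := Fin.coe_sub_iff_le.2 hb0j
      have hApos : (A (i - a0) (j - b0)).re = 1 := by
        apply hAre1
        rw [hsub1, hsub2]
        simp only [ha0, hb0]
        omega
      have hPpos : 0 < (convPow A l a0 b0).re := (ih a0 b0).2.2 (by simp [ha0, hb0])
      unfold conv
      rw [Complex.re_sum]
      refine Finset.sum_pos' (fun a ha => ?_) ⟨a0, Finset.mem_Iic.2 ha0i, ?_⟩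
      · rw [Complex.re_sum]
        exact Finset.sum_nonneg fun b hb => hre0 a ha b hb
      · rw [Complex.re_sum]
        refine Finset.sum_pos' (fun b hb => hre0 a0 (Finset.mem_Iic.2 ha0i) b hb)
          ⟨b0, Finset.mem_Iic.2 hb0j, ?_⟩
        rw [hre a0 (Finset.mem_Iic.2 ha0i) b0 (Finset.mem_Iic.2 hb0j), hApos, mul_one]
        exact hPpos

theorem conv_cayleyHamilton_degree_sharp (M N : ℕ) (hM : 0 < M) (hN : 0 < N)
    (A : Matrix (Fin M) (Fin N) ℂ)
    (hA : ∀ i j, A i j = if i.1 = 0 ∧ j.1 = 0 then 0 else 1) :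
    ∀ l : ℕ, 1 ≤ l → l ≤ M + N - 2 →
      convPow A l ≠ 0 ∧ ∀ i j, i.1 + j.1 = l → convPow A l i j ≠ 0 := by
  intro l hl1 hl2
  have hkey := key M N A hA l
  have hne : ∀ i j, i.1 + j.1 = l → convPow A l i j ≠ 0 := by
    intro i j hij h0
    have := (hkey i j).2.2 hij
    rw [h0] at this
    simp at this
  refine ⟨?_, hne⟩
  have hiM : min l (M - 1) < M := by omega
  have hjN : l - min l (M - 1) < N := by omega
  intro h0
  exact hne ⟨min l (M - 1), hiM⟩ ⟨l - min l (M - 1), hjN⟩ (by show min l (M - 1) + (l - min l (M - 1)) = l; omega)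
    (by rw [h0]; rfl)
end

section
/- If a nonzero monic polynomial p ∈ ℂ[z] of minimal degree annihilates A = (a_{ij}) ∈ ℂ^{M×N} under the convolution calculus (p_⋄(A) = 0), then p(z) = (z - a_{00})^κ for some integer κ with 1 ≤ κ ≤ M+N-1. -/
/-!
The convolution product on `M × N` arrays is multiplication of bivariate polynomials truncated
to the box `[0, M) × [0, N)`, so the arrays form the commutative `ℂ`-algebra
`ℂ[x, y] ⧸ (x ^ M, y ^ N)` and `p_⋄(A) = 0` says that `p` annihilates the image of `A` there.
That image minus `a₀₀` has no constant term, so its `(M + N - 1)`-st power only has monomials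
of total degree `≥ M + N - 1`, all of which vanish in the quotient. Hence the minimal polynomial,
which is `p`, divides `(z - a₀₀) ^ (M + N - 1)`, and it is not `1` because the algebra is nonzero.
-/

open Polynomial Finset

theorem Fin.sum_Iic_sub_eq_sum_antidiagonal {β : Type*} [AddCommMonoid β] {n : ℕ} (i : Fin n)
    (g : ℕ → ℕ → β) :
    ∑ l ∈ Iic i, g l (i - l : Fin n) = ∑ x ∈ antidiagonal (i : ℕ), g x.1 x.2 := by
  calc ∑ l ∈ Iic i, g l (i - l : Fin n)
      = ∑ l ∈ Iic i, g l ((i : ℕ) - l) :=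
        sum_congr rfl fun l hl => by rw [Fin.coe_sub_iff_le.2 (mem_Iic.1 hl)]
    _ = ∑ l ∈ range ((i : ℕ) + 1), g l ((i : ℕ) - l) := by
        rw [Nat.range_succ_eq_Iic, ← Fin.map_valEmbedding_Iic, sum_map]; rfl
    _ = ∑ x ∈ antidiagonal (i : ℕ), g x.1 x.2 := (Nat.sum_antidiagonal_eq_sum_range_succ g i).symm

section Bivariate

variable {R : Type*} [CommSemiring R]

theorem Polynomial.coeff_coeff_mul (P Q : R[X][X]) (i j : ℕ) :
    ((P * Q).coeff i).coeff j = ∑ x ∈ antidiagonal i, ∑ y ∈ antidiagonal j,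
      (P.coeff x.1).coeff y.1 * (Q.coeff x.2).coeff y.2 := by
  simp only [coeff_mul, finsetSum_coeff]

theorem Polynomial.coeff_coeff_pow_eq_zero_of_add_lt {P : R[X][X]} (hP : (P.coeff 0).coeff 0 = 0)
    {n i j : ℕ} (h : i + j < n) : ((P ^ n).coeff i).coeff j = 0 := by
  induction n generalizing i j with
  | zero => omega
  | succ n ih =>
    rw [pow_succ, coeff_coeff_mul]
    refine sum_eq_zero fun x hx => sum_eq_zero fun y hy => ?_
    rw [HasAntidiagonal.mem_antidiagonal] at hx hy
    by_cases hxy : x.1 + y.1 < n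
    · rw [ih hxy, zero_mul]
    · rw [show x.2 = 0 by omega, show y.2 = 0 by omega, hP, mul_zero]

variable (R) in
def coeffVanishIdeal (M N : ℕ) : Ideal R[X][X] where
  carrier := {P | ∀ i < M, ∀ j < N, (P.coeff i).coeff j = 0}
  add_mem' {P Q} hP hQ i hi j hj := by simp [hP i hi j hj, hQ i hi j hj]
  zero_mem' := by simp
  smul_mem' C P hP i hi j hj := by
    rw [smul_eq_mul, coeff_coeff_mul]
    refine sum_eq_zero fun x hx => sum_eq_zero fun y hy => ?_
    rw [HasAntidiagonal.mem_antidiagonal] at hx hy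
    rw [hP _ (by omega) _ (by omega), mul_zero]

variable {M N : ℕ}

theorem pow_mem_coeffVanishIdeal {P : R[X][X]} (hP : (P.coeff 0).coeff 0 = 0) {n : ℕ}
    (hn : M + N - 1 ≤ n) : P ^ n ∈ coeffVanishIdeal R M N :=
  fun _ hi _ hj => coeff_coeff_pow_eq_zero_of_add_lt hP (by omega)

theorem one_notMem_coeffVanishIdeal [Nontrivial R] (hM : 0 < M) (hN : 0 < N) :
    (1 : R[X][X]) ∉ coeffVanishIdeal R M N :=
  fun h => by simpa using h 0 hM 0 hN

noncomputable def toBivariate : Matrix (Fin M) (Fin N) R →ₗ[R] R[X][X] where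
  toFun A := ∑ i : Fin M, ∑ j : Fin N, monomial (i : ℕ) (monomial (j : ℕ) (A i j))
  map_add' A B := by simp [sum_add_distrib]
  map_smul' c A := by simp [smul_sum, smul_monomial]

theorem coeff_coeff_toBivariate (A : Matrix (Fin M) (Fin N) R) (i : Fin M) (j : Fin N) :
    ((toBivariate A).coeff i).coeff j = A i j := by
  simp [toBivariate, finsetSum_coeff, coeff_monomial, Fin.val_inj]

end Bivariate

section Convolution

variable {M N : ℕ}

theorem toBivariate_conv_sub_mul_mem (A B : Matrix (Fin M) (Fin N) ℂ) :
    toBivariate (conv A B) - toBivariate A * toBivariate B ∈ coeffVanishIdeal ℂ M N := by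
  intro i hi j hj
  set P := toBivariate A
  set Q := toBivariate B
  rw [coeff_sub, coeff_sub, sub_eq_zero, coeff_coeff_mul]
  calc ((toBivariate (conv A B)).coeff i).coeff j
      = ∑ l ∈ Iic (⟨i, hi⟩ : Fin M), ∑ k ∈ Iic (⟨j, hj⟩ : Fin N),
          (P.coeff l).coeff k * (Q.coeff (⟨i, hi⟩ - l : Fin M)).coeff (⟨j, hj⟩ - k : Fin N) := by
        simp only [coeff_coeff_toBivariate (conv A B) ⟨i, hi⟩ ⟨j, hj⟩, P, Q,
          coeff_coeff_toBivariate, conv]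
    _ = ∑ l ∈ Iic (⟨i, hi⟩ : Fin M), ∑ y ∈ antidiagonal j,
          (P.coeff l).coeff y.1 * (Q.coeff (⟨i, hi⟩ - l : Fin M)).coeff y.2 :=
        sum_congr rfl fun l _ => Fin.sum_Iic_sub_eq_sum_antidiagonal ⟨j, hj⟩
          fun b c => (P.coeff l).coeff b * (Q.coeff (⟨i, hi⟩ - l : Fin M)).coeff c
    _ = ∑ x ∈ antidiagonal i, ∑ y ∈ antidiagonal j,
          (P.coeff x.1).coeff y.1 * (Q.coeff x.2).coeff y.2 :=
        Fin.sum_Iic_sub_eq_sum_antidiagonal ⟨i, hi⟩ fun a b =>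
          ∑ y ∈ antidiagonal j, (P.coeff a).coeff y.1 * (Q.coeff b).coeff y.2

theorem toBivariate_convId_sub_one_mem :
    toBivariate (convId : Matrix (Fin M) (Fin N) ℂ) - 1 ∈ coeffVanishIdeal ℂ M N := by
  intro i hi j hj
  rw [coeff_sub, coeff_sub, coeff_coeff_toBivariate convId ⟨i, hi⟩ ⟨j, hj⟩, sub_eq_zero]
  by_cases hi0 : i = 0 <;> simp [convId, coeff_one, hi0]

/-- `ℂ[x, y] ⧸ (x ^ M, y ^ N)`, realised with `y` as the inner variable of `ℂ[X][X]`. -/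
abbrev ConvAlgebra (M N : ℕ) : Type := ℂ[X][X] ⧸ coeffVanishIdeal ℂ M N

noncomputable def toConvAlgebra : Matrix (Fin M) (Fin N) ℂ →ₗ[ℂ] ConvAlgebra M N :=
  (Ideal.Quotient.mkₐ ℂ (coeffVanishIdeal ℂ M N)).toLinearMap ∘ₗ toBivariate

theorem toConvAlgebra_apply (A : Matrix (Fin M) (Fin N) ℂ) :
    toConvAlgebra A = Ideal.Quotient.mk _ (toBivariate A) := rfl

theorem toConvAlgebra_injective : Function.Injective (toConvAlgebra (M := M) (N := N)) := by
  refine (injective_iff_map_eq_zero _).2 fun A hA => ?_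
  rw [toConvAlgebra_apply, Ideal.Quotient.eq_zero_iff_mem] at hA
  ext i j
  rw [← coeff_coeff_toBivariate A i j]
  exact hA i i.isLt j j.isLt

theorem toConvAlgebra_conv (A B : Matrix (Fin M) (Fin N) ℂ) :
    toConvAlgebra (conv A B) = toConvAlgebra A * toConvAlgebra B := by
  simp only [toConvAlgebra_apply, ← map_mul]
  exact Ideal.Quotient.eq.2 (toBivariate_conv_sub_mul_mem A B)

theorem toConvAlgebra_convId : toConvAlgebra (convId : Matrix (Fin M) (Fin N) ℂ) = 1 := by
  rw [toConvAlgebra_apply, ← map_one (Ideal.Quotient.mk _)]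
  exact Ideal.Quotient.eq.2 toBivariate_convId_sub_one_mem

theorem toConvAlgebra_convPow (A : Matrix (Fin M) (Fin N) ℂ) (k : ℕ) :
    toConvAlgebra (convPow A k) = toConvAlgebra A ^ k := by
  induction k with
  | zero => exact toConvAlgebra_convId
  | succ k ih => rw [convPow, toConvAlgebra_conv, ih, pow_succ]

theorem toConvAlgebra_convPoly (p : ℂ[X]) (A : Matrix (Fin M) (Fin N) ℂ) :
    toConvAlgebra (convPoly p A) = aeval (toConvAlgebra A) p := by
  simp only [convPoly, map_sum, map_smul, toConvAlgebra_convPow, aeval_def, eval₂_eq_sum,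
    Polynomial.sum_def, ← Algebra.smul_def]

theorem convPoly_eq_zero_iff {p : ℂ[X]} {A : Matrix (Fin M) (Fin N) ℂ} :
    convPoly p A = 0 ↔ aeval (toConvAlgebra A) p = 0 := by
  rw [← toConvAlgebra_convPoly, map_eq_zero_iff _ toConvAlgebra_injective]

theorem aeval_toConvAlgebra_X_sub_C_pow (A : Matrix (Fin M) (Fin N) ℂ) (hM : 0 < M) (hN : 0 < N) :
    aeval (toConvAlgebra A) ((X - C (A ⟨0, hM⟩ ⟨0, hN⟩)) ^ (M + N - 1)) = 0 := by
  have hA : ((toBivariate A - algebraMap ℂ _ (A ⟨0, hM⟩ ⟨0, hN⟩)).coeff 0).coeff 0 = 0 := by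
    simp [← coeff_coeff_toBivariate A ⟨0, hM⟩ ⟨0, hN⟩]
  rw [map_pow, map_sub, aeval_X, aeval_C, toConvAlgebra_apply, ← Ideal.Quotient.mk_algebraMap,
    ← map_sub, ← map_pow, Ideal.Quotient.eq_zero_iff_mem]
  exact pow_mem_coeffVanishIdeal hA le_rfl

theorem ConvAlgebra.one_ne_zero (hM : 0 < M) (hN : 0 < N) : (1 : ConvAlgebra M N) ≠ 0 :=
  fun h => one_notMem_coeffVanishIdeal hM hN <|
    Ideal.Quotient.eq_zero_iff_mem.1 ((map_one _).trans h)

end Convolution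

theorem minpoly.eq_of_forall_natDegree_lt {K B : Type*} [Field K] [Ring B] [Algebra K B] {x : B}
    {p : K[X]} (hmonic : p.Monic) (hp : Polynomial.aeval x p = 0)
    (hmin : ∀ q : K[X], q.Monic → q.natDegree < p.natDegree → Polynomial.aeval x q ≠ 0) :
    p = minpoly K x :=
  minpoly.unique K x hmonic hp fun q hq hxq => by
    by_contra! hlt
    exact hmin q hq (natDegree_lt_natDegree hq.ne_zero hlt) hxq

theorem Polynomial.exists_eq_X_sub_C_pow_of_dvd {R : Type*} [CommRing R] [IsDomain R] {a : R}
    {p : R[X]} {n : ℕ} (hmonic : p.Monic) (hdvd : p ∣ (X - C a) ^ n) :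
    ∃ κ ≤ n, p = (X - C a) ^ κ := by
  obtain ⟨κ, hκ, hassoc⟩ := (dvd_prime_pow (prime_X_sub_C a) n).1 hdvd
  exact ⟨κ, hκ, eq_of_monic_of_associated hmonic ((monic_X_sub_C a).pow κ) hassoc⟩

theorem conv_minimal_polynomial_general (M N : ℕ) (hM : 0 < M) (hN : 0 < N)
    (A : Matrix (Fin M) (Fin N) ℂ) (p : Polynomial ℂ)
    (hmonic : p.Monic) (hann : convPoly p A = 0)
    (hmin : ∀ q : Polynomial ℂ, q.Monic → q ≠ 0 → q.natDegree < p.natDegree →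
      convPoly q A ≠ 0) :
    ∃ κ : ℕ, 1 ≤ κ ∧ κ ≤ M + N - 1 ∧
      p = (Polynomial.X - Polynomial.C (A ⟨0, hM⟩ ⟨0, hN⟩)) ^ κ := by
  rw [convPoly_eq_zero_iff] at hann
  have hp : p = minpoly ℂ (toConvAlgebra A) :=
    minpoly.eq_of_forall_natDegree_lt hmonic hann fun q hq hdeg =>
      convPoly_eq_zero_iff.not.1 (hmin q hq hq.ne_zero hdeg)
  obtain ⟨κ, hκ, rfl⟩ := exists_eq_X_sub_C_pow_of_dvd hmonic
    (hp ▸ minpoly.dvd ℂ _ (aeval_toConvAlgebra_X_sub_C_pow A hM hN))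
  refine ⟨κ, Nat.one_le_iff_ne_zero.2 ?_, hκ, rfl⟩
  rintro rfl
  rw [pow_zero, map_one] at hann
  exact ConvAlgebra.one_ne_zero hM hN hann

theorem conv_minimal_polynomial (M N : ℕ) (hM : 0 < M) (hN : 0 < N)
    (A : Matrix (Fin M) (Fin N) ℂ) (p : Polynomial ℂ)
    (hmonic : p.Monic) (hne : p ≠ 0) (hann : convPoly p A = 0)
    (hmin : ∀ q : Polynomial ℂ, q.Monic → q ≠ 0 → q.natDegree < p.natDegree →
      convPoly q A ≠ 0) :
    ∃ κ : ℕ, 1 ≤ κ ∧ κ ≤ M + N - 1 ∧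
      p = (Polynomial.X - Polynomial.C (A ⟨0, hM⟩ ⟨0, hN⟩)) ^ κ :=
  conv_minimal_polynomial_general M N hM hN A p hmonic hann hmin
end

section
/- Let I = (0, ρ) with 0 < ρ ≤ ∞, α ≥ 0 real, and f(x) = x^α. For every real positive semidefinite 2×2 matrix A = [[a, b], [b, c]] with all entries in I, the matrix f_⋄(A) := [[a^α, αb a^{α-1}], [αb a^{α-1}, αc a^{α-1} + α(α-1) b² a^{α-2}]] is positive semidefinite. Conversely, if α < 0 then there exists such an A for which f_⋄(A) is not positive semidefinite. -/
/-!
Write `t = a ^ (α - 2)`. Then `f_⋄(A) = t • !![a², α a b; α a b, α (a c - b²) + α² b²]`, whose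
determinant is `α t² a² · det A`. For `α ≥ 0` both the diagonal and the determinant are
nonnegative; for `α < 0` any `A` with `det A > 0` makes the determinant negative.
-/

namespace Matrix

theorem posSemidef_fin_two_iff {p q r : ℝ} :
    (!![p, q; q, r]).PosSemidef ↔ 0 ≤ p ∧ 0 ≤ r ∧ 0 ≤ (!![p, q; q, r]).det := by
  refine ⟨fun h ↦ ⟨h.diag_nonneg (i := 0), h.diag_nonneg (i := 1), h.det_nonneg⟩, ?_⟩
  rintro ⟨hp, hr, hdet⟩
  rw [det_fin_two_of] at hdet
  refine posSemidef_iff_dotProduct_mulVec.2 ⟨by ext i j; fin_cases i <;> fin_cases j <;> rfl, ?_⟩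
  intro x
  have hform : star x ⬝ᵥ (!![p, q; q, r] *ᵥ x) = p * x 0 ^ 2 + 2 * q * x 0 * x 1 + r * x 1 ^ 2 := by
    simp only [dotProduct, Pi.star_apply, star_trivial, mulVec, of_apply, cons_val',
      cons_val_fin_one, Fin.sum_univ_two, cons_val_zero, cons_val_one]
    ring
  rw [hform]
  rcases hp.eq_or_lt with rfl | hp
  · obtain rfl : q = 0 := by nlinarith
    nlinarith
  -- `p · form = (p x₀ + q x₁)² + det · x₁²`
  nlinarith [sq_nonneg (p * x 0 + q * x 1), mul_nonneg hdet (sq_nonneg (x 1))]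

theorem posSemidef_smul_iff {n : Type*} [Fintype n] {t : ℝ} (ht : 0 < t) {M : Matrix n n ℝ} :
    (t • M).PosSemidef ↔ M.PosSemidef :=
  ⟨fun h ↦ inv_smul_smul₀ ht.ne' M ▸ h.smul (inv_nonneg.2 ht.le), fun h ↦ h.smul ht.le⟩

end Matrix

open Matrix

/-- The convolution transform `f_⋄(A)` of `A = !![a, b; b, c]` for `f(x) = x ^ α`. -/
noncomputable def rpowConvTransform (α a b c : ℝ) : Matrix (Fin 2) (Fin 2) ℝ :=
  !![a ^ α, α * b * a ^ (α - 1);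
     α * b * a ^ (α - 1), α * c * a ^ (α - 1) + α * (α - 1) * b ^ 2 * a ^ (α - 2)]

section rpowConvTransform

variable {α a b c : ℝ}

theorem rpowConvTransform_eq_smul (ha : 0 < a) :
    rpowConvTransform α a b c = a ^ (α - 2) •
      !![a ^ 2, α * a * b; α * a * b, α * !![a, b; b, c].det + α ^ 2 * b ^ 2] := by
  have h1 : a ^ (α - 1) = a ^ (α - 2) * a := by
    rw [← Real.rpow_add_one ha.ne']; ring_nf
  have h0 : a ^ α = a ^ (α - 2) * a ^ 2 := by
    rw [← Real.rpow_natCast, ← Real.rpow_add ha]; norm_num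
  ext i j
  fin_cases i <;> fin_cases j <;> simp [rpowConvTransform, h0, h1] <;> ring

theorem posSemidef_rpowConvTransform_iff (ha : 0 < a) :
    (rpowConvTransform α a b c).PosSemidef ↔
      0 ≤ α * !![a, b; b, c].det + α ^ 2 * b ^ 2 ∧ 0 ≤ α * !![a, b; b, c].det := by
  have hdet : !![a ^ 2, α * a * b; α * a * b, α * !![a, b; b, c].det + α ^ 2 * b ^ 2].det =
      a ^ 2 * (α * !![a, b; b, c].det) := by
    simp only [det_fin_two_of]; ring
  rw [rpowConvTransform_eq_smul ha, posSemidef_smul_iff (Real.rpow_pos_of_pos ha _),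
    posSemidef_fin_two_iff, hdet, mul_nonneg_iff_of_pos_left (by positivity)]
  exact and_iff_right (sq_nonneg a)

theorem Matrix.PosSemidef.rpowConvTransform (hα : 0 ≤ α) (ha : 0 < a)
    (hA : (!![a, b; b, c]).PosSemidef) : (rpowConvTransform α a b c).PosSemidef := by
  have hD := hA.det_nonneg
  rw [posSemidef_rpowConvTransform_iff ha]
  exact ⟨by positivity, by positivity⟩

theorem not_posSemidef_rpowConvTransform (hα : α < 0) (ha : 0 < a)
    (hD : 0 < !![a, b; b, c].det) : ¬ (rpowConvTransform α a b c).PosSemidef := by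
  rw [posSemidef_rpowConvTransform_iff ha, not_and_or, not_le, not_le]
  exact .inr (mul_neg_of_neg_of_pos hα hD)

end rpowConvTransform

theorem conv_power_function_two_by_two (ρ : ℝ) (hρ : 0 < ρ) (α : ℝ) :
    (0 ≤ α → ∀ a b c : ℝ, a ∈ Set.Ioo 0 ρ → b ∈ Set.Ioo 0 ρ → c ∈ Set.Ioo 0 ρ →
      Matrix.PosSemidef !![a, b; b, c] →
      Matrix.PosSemidef
        !![a ^ α, α * b * a ^ (α - 1);
           α * b * a ^ (α - 1), α * c * a ^ (α - 1) + α * (α - 1) * b ^ 2 * a ^ (α - 2)]) ∧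
    (α < 0 → ∃ a b c : ℝ, a ∈ Set.Ioo 0 ρ ∧ b ∈ Set.Ioo 0 ρ ∧ c ∈ Set.Ioo 0 ρ ∧
      Matrix.PosSemidef !![a, b; b, c] ∧
      ¬ Matrix.PosSemidef
        !![a ^ α, α * b * a ^ (α - 1);
           α * b * a ^ (α - 1), α * c * a ^ (α - 1) + α * (α - 1) * b ^ 2 * a ^ (α - 2)]) := by
  refine ⟨fun hα a b c ha _ _ hA ↦ hA.rpowConvTransform hα ha.1, fun hα ↦ ?_⟩
  have hD : 0 < !![ρ / 2, ρ / 4; ρ / 4, ρ / 2].det := by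
    rw [det_fin_two_of]; nlinarith
  refine ⟨ρ / 2, ρ / 4, ρ / 2, ⟨by positivity, by linarith⟩, ⟨by positivity, by linarith⟩,
    ⟨by positivity, by linarith⟩, ?_, not_posSemidef_rpowConvTransform hα (by positivity) hD⟩
  exact posSemidef_fin_two_iff.2 ⟨by positivity, by positivity, hD.le⟩
end
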